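/- arXiv:0801.4628 — 2 statements merged into one kernel-verified Lean document; each statement's English description precedes it below -/
import Mathlib

section
/- Let X be a set equipped with two topologies τ_S (finer) and τ_W (coarser) such that every τ_S-open set is a countable intersection of τ_W-open sets. Then every subset of X that is residual with respect to τ_S is also residual with respect to τ_W. -/
theorem Dense.mono_topology {X : Type*} {t₁ t₂ : TopologicalSpace X} {s : Set X}
    (h : t₁ ≤ t₂) (hs : @Dense X t₁ s) : @Dense X t₂ s :=
  @dense_iff_closure_eq X t₂ s |>.2 <| Set.eq_univ_of_univ_subset <|
    (@Dense.closure_eq X t₁ s hs).symm.subset.trans (closure.mono h)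

theorem residual_le_of_forall_isOpen_dense_mem {X : Type*} {t₁ t₂ : TopologicalSpace X}
    (h : ∀ U, @IsOpen X t₁ U → @Dense X t₁ U → U ∈ @residual X t₂) :
    @residual X t₂ ≤ @residual X t₁ :=
  Filter.le_countableGenerate_iff_of_countableInterFilter.2 fun U hU ↦ h U hU.1 hU.2

theorem residual_le_of_isOpen_imp_isGδ {X : Type*} {t₁ t₂ : TopologicalSpace X}
    (hle : t₁ ≤ t₂) (hGδ : ∀ U, @IsOpen X t₁ U → @IsGδ X t₂ U) :
    @residual X t₂ ≤ @residual X t₁ :=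
  residual_le_of_forall_isOpen_dense_mem fun U hUo hUd ↦
    @residual_of_dense_Gδ X t₂ U (hGδ U hUo) (hUd.mono_topology hle)

/-- If `τS` is finer than `τW` and every `τS`-open set is a countable intersection of
`τW`-open sets, then every `τS`-residual set is `τW`-residual. -/
theorem sp_residual_implies_wp_residual {X : Type*} (τS τW : TopologicalSpace X)
    (hfine : τS ≤ τW)
    (h : ∀ U : Set X, @IsOpen X τS U →
      ∃ f : ℕ → Set X, (∀ n, @IsOpen X τW (f n)) ∧ U = ⋂ n, f n)
    (A : Set X) (hA : A ∈ @residual X τS) : A ∈ @residual X τW := by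
  refine residual_le_of_isOpen_imp_isGδ hfine (fun U hU ↦ ?_) hA
  obtain ⟨f, hf, rfl⟩ := h U hU
  exact @IsGδ.iInter_of_isOpen X ℕ τW _ f hf
end

section
/- Let X be a topological space, M, M' disjoint-union-decomposed via an open U ⊆ M, and let φ, ψ : M → M' be continuous maps that agree on the closed set M \ U. Suppose further that the combination H(ψ') of ψ' and φ|_{M\U} is well defined for ψ' in some neighborhood of φ|_U. Then the combined map (equal to ψ' on U and to φ on M \ U) is continuous whenever ψ' → φ|_U appropriately near the frontier of U; concretely: if {V_k} is an open cover of U with closure(V_k) ⊆ V_{k+1}, and ψ' agrees with φ outside every V_k beyond some index in the sense of uniform closeness conditions ε_i = 1/min{k : K_i ⊆ V_k} on a locally finite cover {K_i} of U, then the combination is continuous on M. -/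
/-!
Inside the open set `U` the combination agrees with `ψ` on a neighbourhood, so it is
continuous there. A point `x ∉ U` lies outside `closure (V k) ⊆ V (k + 1) ⊆ U` for every `k`,
so near `x` the points of `U` lie in `U \ V k`, where `ψ` is `1/(k+1)`-close to `φ`. Hence
`dist (ψ y) (φ y) → 0` as `y → x` within `U`, and `ψ` inherits the limit `φ x` from `φ`.
-/

open Filter Topology Set

theorem tendsto_zero_of_forall_eventually_le_one_div {α : Type*} {l : Filter α} {f : α → ℝ}
    (hf : ∀ a, 0 ≤ f a) (hle : ∀ k : ℕ, ∀ᶠ a in l, f a ≤ 1 / (k + 1)) :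
    Tendsto f l (𝓝 0) := by
  refine tendsto_order.2 ⟨fun b hb => Eventually.of_forall fun a => hb.trans_le (hf a),
    fun ε hε => ?_⟩
  obtain ⟨k, hk⟩ := exists_nat_one_div_lt hε
  exact (hle k).mono fun a ha => ha.trans_lt hk

theorem continuousAt_piecewise_of_notMem_of_tendsto_dist
    {X Y : Type*} [TopologicalSpace X] [PseudoMetricSpace Y]
    {s : Set X} [DecidablePred (· ∈ s)] {f g : X → Y} {x : X} (hx : x ∉ s)
    (hg : ContinuousAt g x) (hfg : Tendsto (fun y => dist (f y) (g y)) (𝓝[s] x) (𝓝 0)) :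
    ContinuousAt (s.piecewise f g) x := by
  rw [ContinuousAt, piecewise_eq_of_notMem s f g hx]
  have hgf : Tendsto (fun y => dist (g y) (f y)) (𝓝[s] x) (𝓝 0) := by
    simpa only [dist_comm] using hfg
  exact ((hg.mono_left inf_le_left).congr_dist hgf).piecewise (hg.mono_left inf_le_left)

theorem eventually_nhdsWithin_notMem_of_closure_subset {X : Type*} [TopologicalSpace X]
    {U W : Set X} {x : X} (hW : closure W ⊆ U) (hx : x ∉ U) :
    ∀ᶠ y in 𝓝[U] x, y ∉ W :=
  nhdsWithin_le_nhds <| mem_of_superset (isClosed_closure.isOpen_compl.mem_nhds fun h => hx (hW h))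
    fun _ hy h => hy (subset_closure h)

theorem continuous_combination_of_close_near_frontier_general
    {M M' : Type*} [TopologicalSpace M] [MetricSpace M']
    (U : Set M) (hU : IsOpen U) [DecidablePred (· ∈ U)]
    (V : ℕ → Set M)
    (hVsub : ∀ k, closure (V k) ⊆ V (k + 1)) (hVcover : ⋃ k, V k = U)
    (φ ψ : M → M') (hφ : Continuous φ) (hψ : ContinuousOn ψ U)
    (hclose : ∀ k, ∀ x ∈ U \ V k, dist (ψ x) (φ x) ≤ 1 / (k + 1)) :
    Continuous (U.piecewise ψ φ) := by
  have hclosure : ∀ k, closure (V k) ⊆ U := fun k =>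
    (hVsub k).trans (hVcover ▸ subset_iUnion V (k + 1))
  refine continuous_iff_continuousAt.2 fun x => ?_
  by_cases hx : x ∈ U
  · exact (hψ.continuousAt (hU.mem_nhds hx)).congr
      ((piecewise_eqOn U ψ φ).symm.eventuallyEq_of_mem (hU.mem_nhds hx))
  · refine continuousAt_piecewise_of_notMem_of_tendsto_dist hx hφ.continuousAt
      (tendsto_zero_of_forall_eventually_le_one_div (fun _ => dist_nonneg) fun k => ?_)
    filter_upwards [self_mem_nhdsWithin, eventually_nhdsWithin_notMem_of_closure_subset
      (hclosure k) hx] with y hyU hyV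
    exact hclose k y ⟨hyU, hyV⟩

/-- Gluing lemma: let `U ⊆ M` be open, exhausted by open sets `V k` with
`closure (V k) ⊆ V (k+1)`, let `φ : M → M'` be continuous and `ψ : M → M'` continuous
on `U`.  If `ψ` is `1/(k+1)`-close to `φ` on `U \ V k` for every `k` (closeness
tolerance shrinking near the frontier of `U`), then the combination, equal to `ψ` on
`U` and to `φ` on `M \ U`, is continuous on `M`. -/
theorem continuous_combination_of_close_near_frontier
    {M M' : Type*} [TopologicalSpace M] [MetricSpace M']
    (U : Set M) (hU : IsOpen U) [DecidablePred (· ∈ U)]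
    (V : ℕ → Set M) (hVopen : ∀ k, IsOpen (V k))
    (hVsub : ∀ k, closure (V k) ⊆ V (k + 1)) (hVcover : ⋃ k, V k = U)
    (φ ψ : M → M') (hφ : Continuous φ) (hψ : ContinuousOn ψ U)
    (hclose : ∀ k, ∀ x ∈ U \ V k, dist (ψ x) (φ x) ≤ 1 / (k + 1)) :
    Continuous (U.piecewise ψ φ) :=
  continuous_combination_of_close_near_frontier_general U hU V hVsub hVcover φ ψ hφ hψ hclose
end
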